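/- arXiv:2303.18152 — 2 statements merged into one kernel-verified Lean document; each statement's English description precedes it below -/
import Mathlib

section
/- Let T, S be bounded linear operators on a complex Hilbert space and λ ≥ 0. Then w(T*S)² ≤ (1/(2(λ+1)))·‖|T|² + |S|²‖·w(T*S) + (λ/(4(λ+1)))·‖|T|⁴ + |S|⁴‖ + (λ/(2(λ+1)))·w(|S|²|T|²), and the right-hand side is at most (1/(2(λ+1)))·‖|T|² + |S|²‖·w(T*S) + (λ/(2(λ+1)))·‖|T|⁴ + |S|⁴‖. -/
open scoped InnerProductSpace NNReal
open ContinuousLinearMap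

variable {H : Type*} [NormedAddCommGroup H] [InnerProductSpace ℂ H]

noncomputable def numRadius [CompleteSpace H] (T : H →L[ℂ] H) : ℝ :=
  ⨆ x : {x : H // ‖x‖ = 1}, ‖⟪T x, (x : H)⟫_ℂ‖

noncomputable def opAbs [CompleteSpace H] (T : H →L[ℂ] H) : H →L[ℂ] H :=
  CFC.sqrt (ContinuousLinearMap.adjoint T * T)

/-!
Write `A = |T|² = T†T` and `B = |S|² = S†S`, so that `⟪T†S x, x⟫ = ⟪S x, T x⟫` for a unit
vector `x`. Cauchy–Schwarz and AM–GM give `|⟪T†S x, x⟫| ≤ ‖T x‖ ‖S x‖ ≤ ‖A + B‖ / 2` (Dragomir's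
inequality), while Buzano's inequality applied to `⟪A x, x⟫ ⟪x, B x⟫ = ‖T x‖² ‖S x‖²` gives
`w(T†S)² ≤ ‖A² + B²‖ / 4 + w(BA) / 2`. The first claim is the convex combination of these two
bounds with weights `1 / (λ + 1)` and `λ / (λ + 1)`; the second is Dragomir's inequality once
more, for `w(BA)`.
-/

section InnerProductSpace

variable {𝕜 E : Type*} [RCLike 𝕜] [NormedAddCommGroup E] [InnerProductSpace 𝕜 E]

/-- Buzano's inequality. -/
theorem norm_inner_mul_inner_le_of_norm_eq_one (u v e : E) (he : ‖e‖ = 1) :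
    ‖⟪u, e⟫_𝕜 * ⟪e, v⟫_𝕜‖ ≤ (‖u‖ * ‖v‖ + ‖⟪u, v⟫_𝕜‖) / 2 := by
  set c := ⟪e, v⟫_𝕜
  -- the reflection of `v` in the line through `e`
  set z := ((2 : 𝕜) * c) • e - v
  have hee : ⟪e, e⟫_𝕜 = 1 := by rw [inner_self_eq_norm_sq_to_K, he]; norm_num
  have hve : ⟪v, e⟫_𝕜 = starRingEnd 𝕜 c := (inner_conj_symm v e).symm
  have hz : ‖z‖ = ‖v‖ := by
    have h : ⟪z, z⟫_𝕜 = ⟪v, v⟫_𝕜 := by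
      simp only [z, inner_sub_left, inner_sub_right, inner_smul_left, inner_smul_right, hee, hve,
        map_mul, map_ofNat]
      ring
    rw [inner_self_eq_norm_sq_to_K, inner_self_eq_norm_sq_to_K] at h
    exact (pow_left_inj₀ (norm_nonneg z) (norm_nonneg v) two_ne_zero).1 (by exact_mod_cast h)
  have huz : 2 * (⟪u, e⟫_𝕜 * c) = ⟪u, z⟫_𝕜 + ⟪u, v⟫_𝕜 := by
    simp only [z, inner_sub_right, inner_smul_right]
    ring
  have key : 2 * ‖⟪u, e⟫_𝕜 * c‖ ≤ ‖u‖ * ‖v‖ + ‖⟪u, v⟫_𝕜‖ :=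
    calc 2 * ‖⟪u, e⟫_𝕜 * c‖ = ‖⟪u, z⟫_𝕜 + ⟪u, v⟫_𝕜‖ := by rw [← huz, norm_mul]; norm_num
      _ ≤ ‖u‖ * ‖z‖ + ‖⟪u, v⟫_𝕜‖ :=
        (norm_add_le _ _).trans (by gcongr; exact norm_inner_le_norm _ _)
      _ = ‖u‖ * ‖v‖ + ‖⟪u, v⟫_𝕜‖ := by rw [hz]
  linarith

theorem re_inner_apply_le_opNorm (C : E →L[𝕜] E) {x : E} (hx : ‖x‖ = 1) :
    RCLike.re ⟪C x, x⟫_𝕜 ≤ ‖C‖ :=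
  calc RCLike.re ⟪C x, x⟫_𝕜 ≤ ‖C x‖ * ‖x‖ := (RCLike.re_le_norm _).trans (norm_inner_le_norm _ _)
    _ ≤ ‖C‖ * ‖x‖ * ‖x‖ := by gcongr; exact le_opNorm C x
    _ = ‖C‖ := by rw [hx, mul_one, mul_one]

variable [CompleteSpace E]

theorem isSelfAdjoint_adjoint_mul_self (X : E →L[𝕜] E) : IsSelfAdjoint (adjoint X * X) := by
  simpa only [star_eq_adjoint] using IsSelfAdjoint.star_mul_self X

theorem sq_norm_apply_add_sq_norm_apply_le (X Y : E →L[𝕜] E) {x : E} (hx : ‖x‖ = 1) :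
    ‖X x‖ ^ 2 + ‖Y x‖ ^ 2 ≤ ‖adjoint X * X + adjoint Y * Y‖ := by
  rw [apply_norm_sq_eq_inner_adjoint_left, apply_norm_sq_eq_inner_adjoint_left, ← map_add,
    ← inner_add_left, ← add_apply]
  exact re_inner_apply_le_opNorm _ hx

theorem norm_apply_mul_norm_apply_le (X Y : E →L[𝕜] E) {x : E} (hx : ‖x‖ = 1) :
    ‖X x‖ * ‖Y x‖ ≤ ‖adjoint X * X + adjoint Y * Y‖ / 2 := by
  nlinarith [sq_norm_apply_add_sq_norm_apply_le X Y hx, sq_nonneg (‖X x‖ - ‖Y x‖)]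

end InnerProductSpace

theorem opAbs_sq [CompleteSpace H] (T : H →L[ℂ] H) : opAbs T ^ 2 = adjoint T * T :=
  CFC.sq_sqrt _ (by rw [← star_eq_adjoint]; exact star_mul_self_nonneg T)

section NumRadius

variable [CompleteSpace H]

theorem numRadius_nonneg (T : H →L[ℂ] H) : 0 ≤ numRadius T :=
  Real.iSup_nonneg fun _ => norm_nonneg _

theorem norm_inner_apply_le_numRadius (T : H →L[ℂ] H) {x : H} (hx : ‖x‖ = 1) :
    ‖⟪T x, x⟫_ℂ‖ ≤ numRadius T := by
  have hbdd : BddAbove (Set.range fun y : {y : H // ‖y‖ = 1} => ‖⟪T y, (y : H)⟫_ℂ‖) := by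
    refine ⟨‖T‖, ?_⟩
    rintro r ⟨y, rfl⟩
    calc ‖⟪T y, (y : H)⟫_ℂ‖ ≤ ‖T y‖ * ‖(y : H)‖ := norm_inner_le_norm _ _
      _ ≤ ‖T‖ * ‖(y : H)‖ * ‖(y : H)‖ := by gcongr; exact le_opNorm T y
      _ = ‖T‖ := by rw [y.2, mul_one, mul_one]
  exact le_ciSup hbdd ⟨x, hx⟩

theorem numRadius_le {T : H →L[ℂ] H} {c : ℝ} (hc : 0 ≤ c)
    (h : ∀ x : H, ‖x‖ = 1 → ‖⟪T x, x⟫_ℂ‖ ≤ c) : numRadius T ≤ c :=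
  Real.iSup_le (fun x => h x x.2) hc

theorem numRadius_sq_le {T : H →L[ℂ] H} {c : ℝ} (hc : 0 ≤ c)
    (h : ∀ x : H, ‖x‖ = 1 → ‖⟪T x, x⟫_ℂ‖ ^ 2 ≤ c) : numRadius T ^ 2 ≤ c :=
  (Real.le_sqrt (numRadius_nonneg T) hc).1 <| numRadius_le (Real.sqrt_nonneg c) fun x hx =>
    (Real.le_sqrt (norm_nonneg _) hc).2 (h x hx)

theorem norm_inner_adjoint_mul_apply_le (X Y : H →L[ℂ] H) (x : H) :
    ‖⟪(adjoint X * Y) x, x⟫_ℂ‖ ≤ ‖X x‖ * ‖Y x‖ := by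
  rw [mul_apply_eq_comp, adjoint_inner_left, mul_comm]
  exact norm_inner_le_norm _ _

/-- Dragomir's inequality. -/
theorem numRadius_adjoint_mul_le (X Y : H →L[ℂ] H) :
    numRadius (adjoint X * Y) ≤ ‖adjoint X * X + adjoint Y * Y‖ / 2 :=
  numRadius_le (by positivity) fun _ hx =>
    (norm_inner_adjoint_mul_apply_le X Y _).trans (norm_apply_mul_norm_apply_le X Y hx)

theorem numRadius_mul_le_of_isSelfAdjoint {A B : H →L[ℂ] H} (hA : IsSelfAdjoint A)
    (hB : IsSelfAdjoint B) : numRadius (B * A) ≤ ‖A ^ 2 + B ^ 2‖ / 2 := by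
  have h := numRadius_adjoint_mul_le B A
  rwa [isSelfAdjoint_iff'.1 hA, isSelfAdjoint_iff'.1 hB, ← sq, ← sq, add_comm] at h

theorem norm_inner_mul_inner_le_of_isSelfAdjoint {A B : H →L[ℂ] H} (hA : IsSelfAdjoint A)
    (hB : IsSelfAdjoint B) {x : H} (hx : ‖x‖ = 1) :
    ‖⟪A x, x⟫_ℂ * ⟪x, B x⟫_ℂ‖ ≤ ‖A ^ 2 + B ^ 2‖ / 4 + numRadius (B * A) / 2 := by
  have hAB : ‖A x‖ * ‖B x‖ ≤ ‖A ^ 2 + B ^ 2‖ / 2 := by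
    simpa only [isSelfAdjoint_iff'.1 hA, isSelfAdjoint_iff'.1 hB, ← sq]
      using norm_apply_mul_norm_apply_le A B hx
  have hBA : ‖⟪A x, B x⟫_ℂ‖ ≤ numRadius (B * A) := by
    rw [← adjoint_inner_left, isSelfAdjoint_iff'.1 hB]
    exact norm_inner_apply_le_numRadius (B * A) hx
  have := norm_inner_mul_inner_le_of_norm_eq_one (𝕜 := ℂ) (A x) (B x) x hx
  linarith

theorem numRadius_adjoint_mul_sq_le (T S : H →L[ℂ] H) :
    numRadius (adjoint T * S) ^ 2 ≤
      ‖(adjoint T * T) ^ 2 + (adjoint S * S) ^ 2‖ / 4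
        + numRadius (adjoint S * S * (adjoint T * T)) / 2 := by
  have hw := numRadius_nonneg (adjoint S * S * (adjoint T * T))
  refine numRadius_sq_le (by positivity) fun x hx => ?_
  have hprod :
      ‖⟪(adjoint T * T) x, x⟫_ℂ * ⟪x, (adjoint S * S) x⟫_ℂ‖ = (‖T x‖ * ‖S x‖) ^ 2 := by
    rw [mul_apply_eq_comp, mul_apply_eq_comp, adjoint_inner_left, adjoint_inner_right,
      inner_self_eq_norm_sq_to_K, inner_self_eq_norm_sq_to_K, norm_mul, norm_pow, norm_pow,
      RCLike.norm_ofReal, RCLike.norm_ofReal, abs_norm, abs_norm, mul_pow]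
  calc ‖⟪(adjoint T * S) x, x⟫_ℂ‖ ^ 2 ≤ (‖T x‖ * ‖S x‖) ^ 2 := by
        gcongr; exact norm_inner_adjoint_mul_apply_le T S x
    _ ≤ _ := hprod ▸ norm_inner_mul_inner_le_of_isSelfAdjoint
      (isSelfAdjoint_adjoint_mul_self T) (isSelfAdjoint_adjoint_mul_self S) hx

end NumRadius

theorem stmt7 [CompleteSpace H] (T S : H →L[ℂ] H) (l : ℝ) (hl : 0 ≤ l) :
    numRadius (adjoint T * S) ^ 2 ≤
        (1 / (2 * (l + 1))) * ‖opAbs T ^ 2 + opAbs S ^ 2‖ * numRadius (adjoint T * S)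
          + (l / (4 * (l + 1))) * ‖opAbs T ^ 4 + opAbs S ^ 4‖
          + (l / (2 * (l + 1))) * numRadius (opAbs S ^ 2 * opAbs T ^ 2) ∧
      (1 / (2 * (l + 1))) * ‖opAbs T ^ 2 + opAbs S ^ 2‖ * numRadius (adjoint T * S)
          + (l / (4 * (l + 1))) * ‖opAbs T ^ 4 + opAbs S ^ 4‖
          + (l / (2 * (l + 1))) * numRadius (opAbs S ^ 2 * opAbs T ^ 2) ≤
        (1 / (2 * (l + 1))) * ‖opAbs T ^ 2 + opAbs S ^ 2‖ * numRadius (adjoint T * S)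
          + (l / (2 * (l + 1))) * ‖opAbs T ^ 4 + opAbs S ^ 4‖ := by
  have hpow : ∀ X : H →L[ℂ] H, opAbs X ^ 4 = (opAbs X ^ 2) ^ 2 := fun X => by rw [← pow_mul]
  rw [hpow T, hpow S, opAbs_sq, opAbs_sq]
  have hw := numRadius_adjoint_mul_le T S
  have hw2 := numRadius_adjoint_mul_sq_le T S
  have hwBA := numRadius_mul_le_of_isSelfAdjoint (isSelfAdjoint_adjoint_mul_self T)
    (isSelfAdjoint_adjoint_mul_self S)
  have hw0 := numRadius_nonneg (adjoint T * S)
  have hl1 : 0 < l + 1 := by linarith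
  constructor
  · field_simp
    nlinarith [mul_le_mul_of_nonneg_right hw hw0, mul_le_mul_of_nonneg_left hw2 hl]
  · field_simp
    nlinarith [mul_le_mul_of_nonneg_left hwBA hl]
end

section
/- For vectors x, y, e in a complex Hilbert space with ‖e‖ = 1, r ≥ 1 and λ ∈ [0,1], both bounds |⟨x,e⟩⟨e,y⟩|^r ≤ ((1+λ)/2)‖x‖^r‖y‖^r + ((1−λ)/2)|⟨x,y⟩|^r and |⟨x,e⟩⟨e,y⟩|^r ≤ (1 − λ/2)‖x‖^r‖y‖^r + (λ/2)|⟨x,y⟩|^r hold. -/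
open scoped InnerProductSpace

lemma buzano_aux {H : Type*} [NormedAddCommGroup H] [InnerProductSpace ℂ H]
    (x y e : H) (he : ‖e‖ = 1) :
    ‖⟪x, e⟫_ℂ * ⟪e, y⟫_ℂ‖ * 2 ≤ ‖x‖ * ‖y‖ + ‖⟪x, y⟫_ℂ‖ := by
  set c : ℂ := ⟪e, x⟫_ℂ with hc
  set x' : H := (2 * c) • e - x with hx'
  have hinner : ⟪x', y⟫_ℂ = 2 * (⟪x, e⟫_ℂ * ⟪e, y⟫_ℂ) - ⟪x, y⟫_ℂ := by
    rw [hx', inner_sub_left, inner_smul_left, map_mul, hc, inner_conj_symm]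
    rw [map_ofNat (starRingEnd ℂ) 2]
    ring
  have hnorm : ‖x'‖ = ‖x‖ := by
    have hre : (⟪(2 * c) • e, x⟫_ℂ).re = 2 * Complex.normSq c := by
      rw [inner_smul_left, ← hc, map_mul]
      rw [map_ofNat (starRingEnd ℂ) 2]
      simp [Complex.mul_re, Complex.normSq_apply]
      ring
    have hns : ‖(2 * c) • e‖ ^ 2 = 4 * Complex.normSq c := by
      rw [norm_smul, he, mul_one, norm_mul]
      simp [mul_pow, Complex.sq_norm]
      norm_num
    have h1 : ‖x'‖ ^ 2 = ‖x‖ ^ 2 := by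
      rw [hx', @norm_sub_sq ℂ, hns, RCLike.re_to_complex, hre]; ring
    have := congrArg Real.sqrt h1
    simpa [Real.sqrt_sq, norm_nonneg] using this
  have hCS : ‖⟪x', y⟫_ℂ‖ ≤ ‖x‖ * ‖y‖ := by
    calc ‖⟪x', y⟫_ℂ‖ ≤ ‖x'‖ * ‖y‖ := norm_inner_le_norm x' y
    _ = ‖x‖ * ‖y‖ := by rw [hnorm]
  have : ‖(2 : ℂ) * (⟪x, e⟫_ℂ * ⟪e, y⟫_ℂ)‖ ≤ ‖⟪x', y⟫_ℂ‖ + ‖⟪x, y⟫_ℂ‖ := by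
    have : (2 : ℂ) * (⟪x, e⟫_ℂ * ⟪e, y⟫_ℂ) = ⟪x', y⟫_ℂ + ⟪x, y⟫_ℂ := by
      rw [hinner]; ring
    rw [this]; exact norm_add_le _ _
  rw [norm_mul, show ‖(2:ℂ)‖ = 2 by simp] at this
  linarith

theorem stmt14 {H : Type*} [NormedAddCommGroup H] [InnerProductSpace ℂ H]
    (x y e : H) (he : ‖e‖ = 1) (r l : ℝ) (hr : 1 ≤ r) (hl : l ∈ Set.Icc (0:ℝ) 1) :
    ‖⟪x, e⟫_ℂ * ⟪e, y⟫_ℂ‖ ^ r ≤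
        ((1 + l) / 2) * (‖x‖ ^ r * ‖y‖ ^ r) + ((1 - l) / 2) * ‖⟪x, y⟫_ℂ‖ ^ r ∧
      ‖⟪x, e⟫_ℂ * ⟪e, y⟫_ℂ‖ ^ r ≤
        (1 - l / 2) * (‖x‖ ^ r * ‖y‖ ^ r) + (l / 2) * ‖⟪x, y⟫_ℂ‖ ^ r := by
  obtain ⟨hl0, hl1⟩ := hl
  have hr0 : (0:ℝ) ≤ r := le_trans zero_le_one hr
  set a : ℝ := ‖x‖ * ‖y‖ with ha
  set b : ℝ := ‖⟪x, y⟫_ℂ‖ with hb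
  have ha0 : 0 ≤ a := mul_nonneg (norm_nonneg _) (norm_nonneg _)
  have hb0 : 0 ≤ b := norm_nonneg _
  have hba : b ≤ a := norm_inner_le_norm x y
  have hbuz : ‖⟪x, e⟫_ℂ * ⟪e, y⟫_ℂ‖ ≤ (a + b) / 2 := by
    have := buzano_aux x y e he; linarith
  have hL0 : (0:ℝ) ≤ ‖⟪x, e⟫_ℂ * ⟪e, y⟫_ℂ‖ := norm_nonneg _
  have key : ‖⟪x, e⟫_ℂ * ⟪e, y⟫_ℂ‖ ^ r ≤ (a ^ r + b ^ r) / 2 := by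
    calc ‖⟪x, e⟫_ℂ * ⟪e, y⟫_ℂ‖ ^ r ≤ ((a + b) / 2) ^ r :=
          Real.rpow_le_rpow hL0 hbuz hr0
      _ = ((1/2) * a + (1/2) * b) ^ r := by ring_nf
      _ ≤ (1/2) * a ^ r + (1/2) * b ^ r := by
          have := NNReal.rpow_arith_mean_le_arith_mean2_rpow (1/2) (1/2)
            ⟨a, ha0⟩ ⟨b, hb0⟩ (by rw [← two_mul]; norm_num [mul_inv_cancel₀]) hr
          have h2 := NNReal.coe_le_coe.2 this
          push_cast at h2
          convert h2 using 2 <;> rfl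
      _ = (a ^ r + b ^ r) / 2 := by ring
  have har : b ^ r ≤ a ^ r := Real.rpow_le_rpow hb0 hba hr0
  have hab : ‖x‖ ^ r * ‖y‖ ^ r = a ^ r := by
    rw [ha, Real.mul_rpow (norm_nonneg _) (norm_nonneg _)]
  constructor <;> rw [hab] <;> nlinarith
end
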